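/- arXiv:2302.10344 — 2 statements merged into one kernel-verified Lean document; each statement's English description precedes it below -/
import Mathlib

section
/- Let w ∈ ℝⁿ, b ∈ ℝ, and suppose LB ≤ wᵀx + b ≤ UB for a given x. If (x, y, σ) with σ ∈ {0,1} satisfies the big-M constraints wᵀx + b ≤ y, wᵀx + b - (1-σ)·LB ≥ y, y ≤ σ·UB, y ≥ 0, then y = max(0, wᵀx + b). -/
/-- Completeness of the big-M MILP encoding of a ReLU node: any
integer-feasible point computes the ReLU output exactly. -/
theorem bigM_complete (n : ℕ) (w x : Fin n → ℝ) (b LB UB y σ : ℝ)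
    (hlo : LB ≤ ∑ i, w i * x i + b) (hhi : ∑ i, w i * x i + b ≤ UB)
    (hσ : σ = 0 ∨ σ = 1)
    (h1 : ∑ i, w i * x i + b ≤ y)
    (h2 : ∑ i, w i * x i + b - (1 - σ) * LB ≥ y)
    (h3 : y ≤ σ * UB)
    (h4 : 0 ≤ y) :
    y = max 0 (∑ i, w i * x i + b) := by
  rcases hσ with h | h <;> subst h <;> simp at h2 h3 ⊢
  · have hy : y = 0 := le_antisymm h3 h4
    subst hy
    simp [max_eq_left h1]
  · have hy : y = ∑ i, w i * x i + b := le_antisymm (by linarith) h1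
    rw [hy, max_eq_right (by linarith)]
end

section
/- Let f be a single ReLU node f(x) = max(0, wᵀx + b) with valid bounds LB ≤ wᵀx + b ≤ UB, LB < 0 < UB, on a polytope X. The projection onto (x, y) of the set of relaxed big-M feasible points (σ ∈ [0,1]) strictly contains the graph {(x, max(0, wᵀx+b)) : x ∈ X} whenever X contains points with both signs of the pre-activation. -/
/-- On a polytope X containing points with both signs of the pre-activation,
the (x, y)-projection of the relaxed big-M feasible set strictly contains the
graph of the ReLU node. -/
theorem bigM_relaxation_strict (n : ℕ) (w : Fin n → ℝ) (b LB UB : ℝ)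
    (X : Set (Fin n → ℝ)) (hXconv : Convex ℝ X)
    (hLB : LB < 0) (hUB : 0 < UB)
    (hbounds : ∀ x ∈ X, LB ≤ ∑ i, w i * x i + b ∧ ∑ i, w i * x i + b ≤ UB)
    (hneg : ∃ x ∈ X, ∑ i, w i * x i + b < 0)
    (hpos : ∃ x ∈ X, 0 < ∑ i, w i * x i + b) :
    {p : (Fin n → ℝ) × ℝ | p.1 ∈ X ∧ p.2 = max 0 (∑ i, w i * p.1 i + b)} ⊂
    {p : (Fin n → ℝ) × ℝ | p.1 ∈ X ∧ ∃ σ : ℝ, 0 ≤ σ ∧ σ ≤ 1 ∧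
      (∑ i, w i * p.1 i + b ≤ p.2) ∧
      (∑ i, w i * p.1 i + b - (1 - σ) * LB ≥ p.2) ∧
      (p.2 ≤ σ * UB) ∧ (0 ≤ p.2)} := by
  obtain ⟨x₁, hx₁, hz₁⟩ := hneg
  obtain ⟨x₂, hx₂, hz₂⟩ := hpos
  constructor
  · rintro ⟨x, y⟩ ⟨hx, hy⟩
    have hb := hbounds x hx
    simp only [Set.mem_setOf_eq] at hy ⊢
    refine ⟨hx, ?_⟩
    rcases le_or_gt (∑ i, w i * x i + b) 0 with h | h
    · have hy0 : y = 0 := by rw [max_eq_left h] at hy; exact hy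
      exact ⟨0, le_refl 0, zero_le_one, by linarith, by linarith [hb.1],
        by linarith, by linarith⟩
    · have hy0 : y = ∑ i, w i * x i + b := by rw [max_eq_right h.le] at hy; exact hy
      exact ⟨1, zero_le_one, le_refl 1, by linarith, by linarith,
        by linarith [hb.2], by linarith⟩
  · -- strictness
    have hLB₁ : LB ≤ ∑ i, w i * x₁ i + b := (hbounds x₁ hx₁).1
    set z₁ := ∑ i, w i * x₁ i + b with hz₁def
    set z₂ := ∑ i, w i * x₂ i + b with hz₂def
    have hd : 0 < z₂ - z₁ := by linarith
    set lam : ℝ := -z₁ / (2 * (z₂ - z₁)) with hlam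
    have hlam0 : 0 < lam := by
      rw [hlam]; apply div_pos <;> linarith
    have hlam1 : lam < 1 := by
      rw [hlam, div_lt_one (by linarith)]
      linarith
    have hlamd : lam * (z₂ - z₁) = -z₁ / 2 := by
      rw [hlam]
      field_simp
    clear_value lam
    set x' : Fin n → ℝ := (1 - lam) • x₁ + lam • x₂ with hx'def
    have hx' : x' ∈ X := hXconv hx₁ hx₂ (by linarith) hlam0.le (by ring)
    have hz'lin : ∑ i, w i * x' i + b = (1 - lam) * z₁ + lam * z₂ := by
      rw [hx'def, hz₁def, hz₂def]
      have hsum : ∑ i, w i * ((1 - lam) • x₁ + lam • x₂) i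
          = (1 - lam) * ∑ i, w i * x₁ i + lam * ∑ i, w i * x₂ i := by
        rw [Finset.mul_sum, Finset.mul_sum, ← Finset.sum_add_distrib]
        refine Finset.sum_congr rfl fun i _ => ?_
        simp only [Pi.add_apply, Pi.smul_apply, smul_eq_mul]
        ring
      rw [hsum]; ring
    set z' := ∑ i, w i * x' i + b with hz'def
    clear_value z'
    clear_value z₁ z₂
    have hz'val : z' = z₁ / 2 := by
      rw [hz'lin]; linear_combination hlamd
    have hz'neg : z' < 0 := by rw [hz'val]; linarith
    have hz'LB : LB < z' := by
      rw [hz'val]; linarith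
    set σ : ℝ := (LB - z') / (2 * LB) with hσdef
    have hσ0 : 0 < σ := by
      rw [hσdef, div_pos_iff]
      right; constructor <;> linarith
    have hσ1 : σ ≤ 1 := by
      rw [hσdef, div_le_one_iff]
      right; right; constructor <;> linarith
    have hkey : z' - (1 - σ) * LB = (z' - LB) / 2 := by
      rw [hσdef]
      field_simp [hLB.ne]
      ring
    clear_value σ
    have hposhalf : 0 < (z' - LB) / 2 := by linarith
    set y : ℝ := min ((z' - LB) / 2) (σ * UB) with hydef
    have hy0 : 0 < y := lt_min hposhalf (by positivity)
    refine fun hsub => ?_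
    have hmem : (x', y) ∈ {p : (Fin n → ℝ) × ℝ | p.1 ∈ X ∧ p.2 = max 0 (∑ i, w i * p.1 i + b)} := by
      apply hsub
      refine ⟨hx', σ, hσ0.le, hσ1, ?_, ?_, min_le_right _ _, hy0.le⟩
      · show (∑ i, w i * x' i + b : ℝ) ≤ y
        rw [← hz'def]; linarith
      · show y ≤ ∑ i, w i * x' i + b - (1 - σ) * LB
        rw [← hz'def, hkey]
        exact min_le_left _ _
    have hgraph := hmem.2
    have hmax : max 0 (∑ i, w i * x' i + b) = 0 := by
      rw [← hz'def]
      exact max_eq_left hz'neg.le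
    rw [hmax] at hgraph
    linarith
end
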